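/- (Flow equations for the double-discounted occupancy measure μ_π.) In the finite MDP setting with weights η : ℕ → ℝ, η(k) ≥ 0, ∑_k η(k) = 1, for every policy π and all s₀, s, a: μ_π((s,a)|s₀) = π s a · ( ∑_{a'} P^η_π((s,a')|s₀) + γ · ∑_{(s',a')} μ_π((s',a')|s₀) · 𝒫(s',a')(s) ). If moreover η(k) = (1−γ_η)·γ_η^k for some γ_η ∈ (0,1), then also μ_π((s,a)|s₀) = π s a · ( (1−γ_η) · ∑_{a'} ρ_π((s,a')|s₀) + γ_η · ∑_{(s',a')} μ_π((s',a')|s₀) · 𝒫(s',a')(s) ). -/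

import Mathlib

open scoped BigOperators Classical

/-- `n`-step state–action distribution of the stationary policy `π` started at a state. -/
noncomputable def PstepS {S A : Type*} [Fintype S] [Fintype A]
    (P : S × A → PMF S) (π : S → PMF A) : ℕ → S → S × A → ℝ
  | 0, s₀, x => if x.1 = s₀ then (π x.1 x.2).toReal else 0
  | n + 1, s₀, x => ∑ y : S × A, PstepS P π n s₀ y * (P y x.1).toReal * (π x.1 x.2).toReal

/-- `n`-step state–action distribution of `π` started at a state–action pair. -/
noncomputable def PstepSA {S A : Type*} [Fintype S] [Fintype A]
    (P : S × A → PMF S) (π : S → PMF A) : ℕ → S × A → S × A → ℝ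
  | 0, y, x => if x = y then 1 else 0
  | n + 1, y, x => ∑ z : S × A, PstepSA P π n y z * (P z x.1).toReal * (π x.1 x.2).toReal

/-- η-weighted future state distribution, started at a state. -/
noncomputable def PetaS {S A : Type*} [Fintype S] [Fintype A]
    (P : S × A → PMF S) (π : S → PMF A) (η : ℕ → ℝ) (s₀ : S) (x : S × A) : ℝ :=
  ∑' k, η k * PstepS P π k s₀ x

/-- η-weighted future state distribution, started at a state–action pair. -/
noncomputable def PetaSA {S A : Type*} [Fintype S] [Fintype A]
    (P : S × A → PMF S) (π : S → PMF A) (η : ℕ → ℝ) (y : S × A) (x : S × A) : ℝ :=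
  ∑' k, η k * PstepSA P π k y x

/-- γ-discounted occupancy measure, started at a state. -/
noncomputable def rhoS {S A : Type*} [Fintype S] [Fintype A]
    (P : S × A → PMF S) (π : S → PMF A) (γ : ℝ) (s₀ : S) (x : S × A) : ℝ :=
  ∑' t, γ ^ t * PstepS P π t s₀ x

/-- γ-discounted occupancy measure, started at a state–action pair. -/
noncomputable def rhoSA {S A : Type*} [Fintype S] [Fintype A]
    (P : S × A → PMF S) (π : S → PMF A) (γ : ℝ) (y : S × A) (x : S × A) : ℝ :=
  ∑' t, γ ^ t * PstepSA P π t y x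

/-- η-weighted, γ-discounted future occupancy measure `μ_π`. -/
noncomputable def muS {S A : Type*} [Fintype S] [Fintype A]
    (P : S × A → PMF S) (π : S → PMF A) (γ : ℝ) (η : ℕ → ℝ) (s₀ : S) (x : S × A) : ℝ :=
  ∑' t, ∑' k, γ ^ t * η k * PstepS P π (t + k) s₀ x

/-!
Write `μ_π = ∑_t γ^t G_t` with `G_t = ∑_k η(k) P^{t+k}_π` (`PetaShift`). One step of the chain, `stepDist`, is
linear and maps `P^n_π` to `P^{n+1}_π`, hence `G_t` to `G_{t+1}`; splitting off `t = 0` gives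
`μ_π = P^η_π + γ · stepDist μ_π`. For geometric `η`, splitting off `k = 0` instead gives
`G_t = (1 - γ_η) P^t_π + γ_η G_{t+1}`, so `μ_π = (1 - γ_η) ρ_π + γ_η · stepDist μ_π`. The factor
`π s a` appears because every `P^n_π(s, ·)` is `π s` times its state marginal.
-/

lemma PMF.sum_toReal {α : Type*} [Fintype α] (p : PMF α) : ∑ a, (p a).toReal = 1 := by
  rw [← ENNReal.toReal_sum fun a _ => p.apply_ne_top a, ← tsum_fintype (L := .unconditional _),
    p.tsum_coe, ENNReal.toReal_one]

section Summability

variable {ι : Type*} {w g : ι → ℝ}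

lemma Summable.mul_of_nonneg_of_le_one (hw : Summable w) (hw0 : ∀ i, 0 ≤ w i)
    (hg0 : ∀ i, 0 ≤ g i) (hg1 : ∀ i, g i ≤ 1) : Summable fun i => w i * g i :=
  hw.of_nonneg_of_le (fun i => mul_nonneg (hw0 i) (hg0 i))
    fun i => mul_le_of_le_one_right (hw0 i) (hg1 i)

lemma tsum_mul_le_tsum_of_le_one (hw : Summable w) (hw0 : ∀ i, 0 ≤ w i)
    (hg0 : ∀ i, 0 ≤ g i) (hg1 : ∀ i, g i ≤ 1) : ∑' i, w i * g i ≤ ∑' i, w i :=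
  (hw.mul_of_nonneg_of_le_one hw0 hg0 hg1).tsum_le_tsum
    (fun i => mul_le_of_le_one_right (hw0 i) (hg1 i)) hw

lemma summable_of_tsum_ne_zero {f : ι → ℝ} (hf : ∑' i, f i ≠ 0) : Summable f := by
  by_contra h
  exact hf (tsum_eq_zero_of_not_summable h)

lemma tsum_eq_mul_sum_tsum {α : Type*} [Fintype α] {f : ι → α → ℝ} {c : ℝ} {a : α}
    (hf : ∀ i, f i a = c * ∑ b, f i b) (hs : ∀ b, Summable fun i => f i b) :
    ∑' i, f i a = c * ∑ b, ∑' i, f i b := by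
  rw [tsum_congr hf, tsum_mul_left, Summable.tsum_finsetSum fun b _ => hs b]

end Summability

section StepDist

variable {S A : Type*} [Fintype S] [Fintype A] (P : S × A → PMF S) (π : S → PMF A)

noncomputable def stepDist (f : S × A → ℝ) (x : S × A) : ℝ :=
  (π x.1 x.2).toReal * ∑ y, f y * (P y x.1).toReal

variable {P π}

lemma stepDist_nonneg {f : S × A → ℝ} (hf : ∀ y, 0 ≤ f y) (x : S × A) :
    0 ≤ stepDist P π f x :=
  mul_nonneg ENNReal.toReal_nonneg
    (Finset.sum_nonneg fun y _ => mul_nonneg (hf y) ENNReal.toReal_nonneg)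

lemma sum_stepDist_state (f : S × A → ℝ) (s : S) :
    ∑ a, stepDist P π f (s, a) = ∑ y, f y * (P y s).toReal := by
  simp only [stepDist, ← Finset.sum_mul, PMF.sum_toReal, one_mul]

lemma stepDist_eq_mul_sum (f : S × A → ℝ) (s : S) (a : A) :
    stepDist P π f (s, a) = (π s a).toReal * ∑ a', stepDist P π f (s, a') := by
  rw [sum_stepDist_state]
  rfl

lemma sum_stepDist (f : S × A → ℝ) : ∑ x, stepDist P π f x = ∑ y, f y := by
  rw [Fintype.sum_prod_type, Finset.sum_congr rfl fun s _ => sum_stepDist_state f s,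
    Finset.sum_comm]
  simp only [← Finset.mul_sum, PMF.sum_toReal, mul_one]

lemma tsum_mul_stepDist {ι : Type*} {w : ι → ℝ} {f : ι → S × A → ℝ}
    (hs : ∀ y, Summable fun i => w i * f i y) (x : S × A) :
    ∑' i, w i * stepDist P π (f i) x = stepDist P π (fun y => ∑' i, w i * f i y) x := by
  have hlin : ∀ i, w i * stepDist P π (f i) x =
      ∑ y, w i * f i y * ((P y x.1).toReal * (π x.1 x.2).toReal) := fun i => by
    simp only [stepDist, Finset.mul_sum]
    exact Finset.sum_congr rfl fun y _ => by ring
  rw [tsum_congr hlin, Summable.tsum_finsetSum fun y _ => (hs y).mul_right _, stepDist,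
    Finset.mul_sum]
  exact Finset.sum_congr rfl fun y _ => by rw [tsum_mul_right]; ring

end StepDist

section Occupancy

variable {S A : Type*} [Fintype S] [Fintype A] {P : S × A → PMF S} {π : S → PMF A}

lemma PstepS_succ (n : ℕ) (s₀ : S) :
    PstepS P π (n + 1) s₀ = stepDist P π (PstepS P π n s₀) := by
  ext x
  simp only [PstepS, stepDist, Finset.mul_sum]
  exact Finset.sum_congr rfl fun y _ => by ring

lemma PstepS_nonneg (n : ℕ) (s₀ : S) (x : S × A) : 0 ≤ PstepS P π n s₀ x := by
  induction n generalizing x with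
  | zero =>
    simp only [PstepS]
    split_ifs <;> simp
  | succ n ih =>
    rw [PstepS_succ]
    exact stepDist_nonneg ih x

lemma sum_PstepS (n : ℕ) (s₀ : S) : ∑ x, PstepS P π n s₀ x = 1 := by
  induction n with
  | zero =>
    simp [Fintype.sum_prod_type, PstepS, PMF.sum_toReal]
  | succ n ih => rw [PstepS_succ, sum_stepDist, ih]

lemma PstepS_le_one (n : ℕ) (s₀ : S) (x : S × A) : PstepS P π n s₀ x ≤ 1 := by
  rw [← sum_PstepS (P := P) (π := π) n s₀]
  exact Finset.single_le_sum (fun y _ => PstepS_nonneg n s₀ y) (Finset.mem_univ x)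

lemma PstepS_eq_mul_sum (n : ℕ) (s₀ s : S) (a : A) :
    PstepS P π n s₀ (s, a) = (π s a).toReal * ∑ a', PstepS P π n s₀ (s, a') := by
  cases n with
  | zero =>
    simp only [PstepS]
    split_ifs <;> simp [PMF.sum_toReal]
  | succ n => rw [PstepS_succ, stepDist_eq_mul_sum]

lemma summable_mul_PstepS {w : ℕ → ℝ} (hw : Summable w) (hw0 : ∀ k, 0 ≤ w k) (n : ℕ → ℕ)
    (s₀ : S) (x : S × A) : Summable fun k => w k * PstepS P π (n k) s₀ x :=
  hw.mul_of_nonneg_of_le_one hw0 (fun _ => PstepS_nonneg _ s₀ x) fun _ => PstepS_le_one _ s₀ x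

lemma tsum_mul_PstepS_eq_mul_sum {w : ℕ → ℝ} (hw : Summable w) (hw0 : ∀ k, 0 ≤ w k)
    (s₀ s : S) (a : A) :
    ∑' k, w k * PstepS P π k s₀ (s, a) =
      (π s a).toReal * ∑ a', ∑' k, w k * PstepS P π k s₀ (s, a') :=
  tsum_eq_mul_sum_tsum (f := fun k a' => w k * PstepS P π k s₀ (s, a'))
    (fun k => by
      simp only [PstepS_eq_mul_sum k s₀ s a, Finset.mul_sum]
      exact Finset.sum_congr rfl fun _ _ => mul_left_comm _ _ _)
    fun a' => summable_mul_PstepS hw hw0 id s₀ (s, a')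

variable (P π) in
noncomputable def PetaShift (η : ℕ → ℝ) (t : ℕ) (s₀ : S) (x : S × A) : ℝ :=
  ∑' k, η k * PstepS P π (t + k) s₀ x

lemma PetaShift_zero (η : ℕ → ℝ) (s₀ : S) : PetaShift P π η 0 s₀ = PetaS P π η s₀ := by
  ext x
  simp [PetaShift, PetaS]

lemma muS_eq_tsum_PetaShift (γ : ℝ) (η : ℕ → ℝ) (s₀ : S) (x : S × A) :
    muS P π γ η s₀ x = ∑' t, γ ^ t * PetaShift P π η t s₀ x := by
  simp only [muS, PetaShift, ← tsum_mul_left, mul_assoc]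

variable {η : ℕ → ℝ}

lemma PetaShift_nonneg (hη0 : ∀ k, 0 ≤ η k) (t : ℕ) (s₀ : S) (x : S × A) :
    0 ≤ PetaShift P π η t s₀ x :=
  tsum_nonneg fun _ => mul_nonneg (hη0 _) (PstepS_nonneg _ s₀ x)

variable (hη0 : ∀ k, 0 ≤ η k) (hη : Summable η)
include hη0 hη

lemma PetaShift_succ (t : ℕ) (s₀ : S) :
    PetaShift P π η (t + 1) s₀ = stepDist P π (PetaShift P π η t s₀) := by
  ext x
  simp only [PetaShift, add_right_comm t 1, PstepS_succ]
  exact tsum_mul_stepDist (fun y => summable_mul_PstepS hη hη0 (t + ·) s₀ y) x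

lemma PetaShift_le_one (hη1 : ∑' k, η k = 1) (t : ℕ) (s₀ : S) (x : S × A) :
    PetaShift P π η t s₀ x ≤ 1 :=
  hη1 ▸ tsum_mul_le_tsum_of_le_one hη hη0 (fun _ => PstepS_nonneg _ s₀ x)
    fun _ => PstepS_le_one _ s₀ x

lemma tsum_pow_mul_PetaShift_succ {γ : ℝ} (hγ0 : 0 ≤ γ) (hγ1 : γ < 1) (hη1 : ∑' k, η k = 1)
    (s₀ : S) (x : S × A) :
    ∑' t, γ ^ t * PetaShift P π η (t + 1) s₀ x = stepDist P π (muS P π γ η s₀) x := by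
  have hG : ∀ y, Summable fun t => γ ^ t * PetaShift P π η t s₀ y := fun y =>
    (summable_geometric_of_lt_one hγ0 hγ1).mul_of_nonneg_of_le_one (pow_nonneg hγ0)
      (fun t => PetaShift_nonneg hη0 t s₀ y) fun t => PetaShift_le_one hη0 hη hη1 t s₀ y
  simp only [PetaShift_succ hη0 hη, tsum_mul_stepDist hG]
  exact congrArg (stepDist P π · x) (funext fun y => (muS_eq_tsum_PetaShift γ η s₀ y).symm)

end Occupancy

section FlowEquations

variable {S A : Type*} [Fintype S] [Fintype A] {P : S × A → PMF S} {π : S → PMF A}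
  {γ : ℝ} {η : ℕ → ℝ}

lemma muS_eq_PetaS_add_stepDist (hγ0 : 0 ≤ γ) (hγ1 : γ < 1) (hη0 : ∀ k, 0 ≤ η k)
    (hη1 : ∑' k, η k = 1) (s₀ : S) (x : S × A) :
    muS P π γ η s₀ x = PetaS P π η s₀ x + γ * stepDist P π (muS P π γ η s₀) x := by
  have hη : Summable η := summable_of_tsum_ne_zero (by simp [hη1])
  have hG : Summable fun t => γ ^ t * PetaShift P π η t s₀ x :=
    (summable_geometric_of_lt_one hγ0 hγ1).mul_of_nonneg_of_le_one (pow_nonneg hγ0)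
      (fun t => PetaShift_nonneg hη0 t s₀ x) fun t => PetaShift_le_one hη0 hη hη1 t s₀ x
  rw [muS_eq_tsum_PetaShift, hG.tsum_eq_zero_add, PetaShift_zero,
    ← tsum_pow_mul_PetaShift_succ hη0 hη hγ0 hγ1 hη1, ← tsum_mul_left]
  simp only [pow_succ, pow_zero, one_mul, mul_comm _ γ, mul_assoc]

lemma PetaShift_eq_of_geometric {γη : ℝ} (hgeo : ∀ k, η k = (1 - γη) * γη ^ k)
    (hη0 : ∀ k, 0 ≤ η k) (hη : Summable η) (t : ℕ) (s₀ : S) (x : S × A) :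
    PetaShift P π η t s₀ x =
      (1 - γη) * PstepS P π t s₀ x + γη * PetaShift P π η (t + 1) s₀ x := by
  rw [PetaShift, (summable_mul_PstepS hη hη0 (t + ·) s₀ x).tsum_eq_zero_add, PetaShift,
    ← tsum_mul_left]
  congr 1
  · simp [hgeo]
  · refine tsum_congr fun k => ?_
    rw [hgeo, hgeo, add_right_comm t 1 k, ← add_assoc]
    ring

lemma muS_eq_rhoS_add_stepDist {γη : ℝ} (hgeo : ∀ k, η k = (1 - γη) * γη ^ k)
    (hγ0 : 0 ≤ γ) (hγ1 : γ < 1) (hη0 : ∀ k, 0 ≤ η k) (hη1 : ∑' k, η k = 1)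
    (s₀ : S) (x : S × A) :
    muS P π γ η s₀ x = (1 - γη) * rhoS P π γ s₀ x + γη * stepDist P π (muS P π γ η s₀) x := by
  have hη : Summable η := summable_of_tsum_ne_zero (by simp [hη1])
  have hγ := summable_geometric_of_lt_one hγ0 hγ1
  have hρ : Summable fun t => γ ^ t * PstepS P π t s₀ x :=
    summable_mul_PstepS hγ (pow_nonneg hγ0) id s₀ x
  have hG : Summable fun t => γ ^ t * PetaShift P π η (t + 1) s₀ x :=
    hγ.mul_of_nonneg_of_le_one (pow_nonneg hγ0)
      (fun t => PetaShift_nonneg hη0 _ s₀ x) fun t => PetaShift_le_one hη0 hη hη1 _ s₀ x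
  calc muS P π γ η s₀ x
      = ∑' t, ((1 - γη) * (γ ^ t * PstepS P π t s₀ x) +
          γη * (γ ^ t * PetaShift P π η (t + 1) s₀ x)) := by
        rw [muS_eq_tsum_PetaShift]
        exact tsum_congr fun t => by rw [PetaShift_eq_of_geometric hgeo hη0 hη]; ring
    _ = (1 - γη) * rhoS P π γ s₀ x + γη * stepDist P π (muS P π γ η s₀) x := by
        rw [(hρ.mul_left _).tsum_add (hG.mul_left _), tsum_mul_left, tsum_mul_left,
          tsum_pow_mul_PetaShift_succ hη0 hη hγ0 hγ1 hη1]
        rfl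

end FlowEquations

theorem stmt6_general {S A : Type*} [Fintype S] [Fintype A]
    (P : S × A → PMF S) (π : S → PMF A) (γ : ℝ) (hγ : γ ∈ Set.Ioo (0 : ℝ) 1)
    (η : ℕ → ℝ) (hη0 : ∀ k, 0 ≤ η k) (hη1 : ∑' k, η k = 1) :
    -- flow equation of `μ_π` in the `γ` direction
    (∀ (s₀ s : S) (a : A),
      muS P π γ η s₀ (s, a) =
        (π s a).toReal * ((∑ a' : A, PetaS P π η s₀ (s, a')) +
          γ * ∑ y : S × A, muS P π γ η s₀ y * (P y s).toReal)) ∧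
    -- flow equation of `μ_π` in the `γ_η` direction, for geometric `η`
    (∀ γη : ℝ, γη ∈ Set.Ioo (0 : ℝ) 1 → (∀ k, η k = (1 - γη) * γη ^ k) →
      ∀ (s₀ s : S) (a : A),
        muS P π γ η s₀ (s, a) =
          (π s a).toReal * ((1 - γη) * (∑ a' : A, rhoS P π γ s₀ (s, a')) +
            γη * ∑ y : S × A, muS P π γ η s₀ y * (P y s).toReal)) := by
  have hη : Summable η := summable_of_tsum_ne_zero (by simp [hη1])
  have hγ' := summable_geometric_of_lt_one hγ.1.le hγ.2
  refine ⟨fun s₀ s a => ?_, fun γη _ hgeo s₀ s a => ?_⟩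
  · have hPeta : PetaS P π η s₀ (s, a) = (π s a).toReal * ∑ a', PetaS P π η s₀ (s, a') :=
      tsum_mul_PstepS_eq_mul_sum hη hη0 s₀ s a
    rw [muS_eq_PetaS_add_stepDist hγ.1.le hγ.2 hη0 hη1, hPeta, stepDist]
    ring
  · have hρ : rhoS P π γ s₀ (s, a) = (π s a).toReal * ∑ a', rhoS P π γ s₀ (s, a') :=
      tsum_mul_PstepS_eq_mul_sum hγ' (pow_nonneg hγ.1.le) s₀ s a
    rw [muS_eq_rhoS_add_stepDist hgeo hγ.1.le hγ.2 hη0 hη1, hρ, stepDist]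
    ring

theorem stmt6 {S A : Type*} [Fintype S] [Fintype A] [Nonempty S] [Nonempty A]
    (P : S × A → PMF S) (π : S → PMF A) (γ : ℝ) (hγ : γ ∈ Set.Ioo (0 : ℝ) 1)
    (η : ℕ → ℝ) (hη0 : ∀ k, 0 ≤ η k) (hη1 : ∑' k, η k = 1) :
    -- flow equation of `μ_π` in the `γ` direction
    (∀ (s₀ s : S) (a : A),
      muS P π γ η s₀ (s, a) =
        (π s a).toReal * ((∑ a' : A, PetaS P π η s₀ (s, a')) +
          γ * ∑ y : S × A, muS P π γ η s₀ y * (P y s).toReal)) ∧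
    -- flow equation of `μ_π` in the `γ_η` direction, for geometric `η`
    (∀ γη : ℝ, γη ∈ Set.Ioo (0 : ℝ) 1 → (∀ k, η k = (1 - γη) * γη ^ k) →
      ∀ (s₀ s : S) (a : A),
        muS P π γ η s₀ (s, a) =
          (π s a).toReal * ((1 - γη) * (∑ a' : A, rhoS P π γ s₀ (s, a')) +
            γη * ∑ y : S × A, muS P π γ η s₀ y * (P y s).toReal)) :=
  stmt6_general P π γ hγ η hη0 hη1
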